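/- Let k ≥ 2, t ≥ k + 1, and n ≥ 8k + 2t − 4 be integers, let c be an edge-coloring of K_n that contains no rainbow copy of kP₄ ∪ tP₂, let H be a rainbow subgraph of K_n isomorphic to (k − 1)P₄ ∪ (t + 2)P₂ with H₂ denoting the union of its t + 2 path components on 2 vertices, let G be a rainbow spanning subgraph of K_n whose edge set contains E(H), and set V' = V(K_n) ∖ V(H). Then |E(G[V'])| + |[V(H₂), V']_G| ≤ 2n − 4t − 8k. -/

import Mathlib

/-- The disjoint union of `k` copies of a graph `G`, on vertex set `Fin k × V`. -/
def SimpleGraph.multiCopy (k : ℕ) {V : Type*} (G : SimpleGraph V) :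
    SimpleGraph (Fin k × V) where
  Adj a b := a.1 = b.1 ∧ G.Adj a.2 b.2
  symm := by
    constructor
    intro a b h
    exact ⟨h.1.symm, h.2.symm⟩
  loopless := by
    constructor
    intro a h
    exact G.loopless.irrefl _ h.2

/-- The disjoint union of two graphs `G` and `H`, on vertex set `V ⊕ W`. -/
def SimpleGraph.disjUnion {V W : Type*} (G : SimpleGraph V) (H : SimpleGraph W) :
    SimpleGraph (V ⊕ W) where
  Adj a b :=
    match a, b with
    | Sum.inl a, Sum.inl b => G.Adj a b
    | Sum.inr a, Sum.inr b => H.Adj a b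
    | _, _ => False
  symm := by
    constructor
    rintro (a | a) (b | b) h <;> simp only at h ⊢
    · exact h.symm
    · exact h.symm
  loopless := by
    constructor
    rintro (a | a) h <;> simp only at h
    · exact G.loopless.irrefl _ h
    · exact H.loopless.irrefl _ h

/-- The linear forest `k P₄ ∪ t P₂`. -/
def kP4tP2 (k t : ℕ) : SimpleGraph ((Fin k × Fin 4) ⊕ (Fin t × Fin 2)) :=
  (SimpleGraph.multiCopy k (SimpleGraph.pathGraph 4)).disjUnion
    (SimpleGraph.multiCopy t (SimpleGraph.pathGraph 2))

/-- The edge-coloring `c` of `K_n` admits a rainbow copy of `H`: there is an injection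
of the vertices of `H` into `Fin n` such that distinct edges of `H` get distinct colors. -/
def HasRainbowCopy {V : Type*} (n : ℕ) (c : Sym2 (Fin n) → ℕ) (H : SimpleGraph V) : Prop :=
  ∃ f : V ↪ Fin n, Set.InjOn (fun e => c (Sym2.map (⇑f) e)) H.edgeSet

/-- The number of colors used by an edge-coloring `c` on the edges of `K_n`. -/
noncomputable def colorCount (n : ℕ) (c : Sym2 (Fin n) → ℕ) : ℕ :=
  (c '' (⊤ : SimpleGraph (Fin n)).edgeSet).ncard

/-- The anti-Ramsey number `AR(n, H)`: the maximum number of colors in an edge-coloring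
of `K_n` containing no rainbow copy of `H`. -/
noncomputable def AR {V : Type*} (n : ℕ) (H : SimpleGraph V) : ℕ :=
  sSup {m : ℕ | ∃ c : Sym2 (Fin n) → ℕ, colorCount n c = m ∧ ¬ HasRainbowCopy n c H}

/-- The set of edges of `G` with both endpoints in `A` (the edges of `G[A]`). -/
def edgesInside {α : Type*} (G : SimpleGraph α) (A : Set α) : Set (Sym2 α) :=
  {e ∈ G.edgeSet | ∀ v ∈ e, v ∈ A}

/-- The set of edges of `G` with one endpoint in `A` and the other in `B`,
i.e. `[A, B]_G`. -/
def edgesBetween {α : Type*} (G : SimpleGraph α) (A B : Set α) : Set (Sym2 α) :=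
  {e ∈ G.edgeSet | ∃ u v, e = s(u, v) ∧ u ∈ A ∧ v ∈ B}

/-!
Let `V'` be the set of vertices outside the copy `H` of `(k-1)P₄ ∪ (t+2)P₂`. As `G` is rainbow, a
`P₄` of `G` avoiding the `P₄`-components of `H` and all but two of its `P₂`-components would
complete `H` to a rainbow `kP₄ ∪ tP₂`. Hence a vertex `v ∈ V'` adjacent to a vertex `x` of a
`P₂`-component `xy` has no neighbour `w ∈ V'` (look at `y x v w`) and no neighbour in another
`P₂`-component; and `G[V']` contains no `P₄`, so every edge of `G[V']` has an end with at most two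
neighbours in `V' ∪ V(H₂)`. Charging every counted edge to such an end in `V'` charges each vertex
of `V'` at most twice, and `|V'| = n - 4k - 2t`.
-/

open SimpleGraph

namespace SimpleGraph

variable {α β γ : Type*} {A : SimpleGraph α} {B : SimpleGraph β} {G : SimpleGraph γ}

namespace Copy

def disjUnionInl : Copy A (A.disjUnion B) := ⟨⟨Sum.inl, fun h => h⟩, Sum.inl_injective⟩

def disjUnionInr : Copy B (A.disjUnion B) := ⟨⟨Sum.inr, fun h => h⟩, Sum.inr_injective⟩

def sumElim (φ : Copy A G) (ψ : Copy B G) (h : ∀ a b, φ a ≠ ψ b) : Copy (A.disjUnion B) G where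
  toHom.toFun := Sum.elim φ ψ
  toHom.map_rel' := by
    rintro (a | b) (a' | b') hadj
    exacts [φ.toHom.map_adj hadj, hadj.elim, hadj.elim, ψ.toHom.map_adj hadj]
  injective' := by
    rintro (a | b) (a' | b') heq
    · exact congrArg _ (φ.injective heq)
    · exact (h a b' heq).elim
    · exact (h a' b heq.symm).elim
    · exact congrArg _ (ψ.injective heq)

def multiCopyMap {s s' : ℕ} (g : Fin s ↪ Fin s') : Copy (A.multiCopy s) (A.multiCopy s') where
  toHom.toFun := Prod.map g _root_.id
  toHom.map_rel' := fun ⟨hi, hadj⟩ => ⟨congrArg g hi, hadj⟩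
  injective' := g.injective.prodMap Function.injective_id

def multiCopySnoc {m : ℕ} (φ : Copy (A.multiCopy m) G) (ψ : Copy A G) (h : ∀ p a, φ p ≠ ψ a) :
    Copy (A.multiCopy (m + 1)) G where
  toHom.toFun p := Fin.lastCases (ψ p.2) (fun i => φ (i, p.2)) p.1
  toHom.map_rel' := by
    rintro ⟨i, a⟩ ⟨i', a'⟩ ⟨rfl, hadj⟩
    induction i using Fin.lastCases with
    | last => simpa using ψ.toHom.map_adj hadj
    | cast i =>
      simpa using φ.toHom.map_adj (show (A.multiCopy m).Adj (i, a) (i, a') from ⟨rfl, hadj⟩)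
  injective' := by
    rintro ⟨i, a⟩ ⟨i', a'⟩ heq
    induction i using Fin.lastCases with
    | last =>
      induction i' using Fin.lastCases with
      | last => simpa using ψ.injective (by simpa using heq)
      | cast i' => exact (h _ _ (by simpa using heq.symm)).elim
    | cast i =>
      induction i' using Fin.lastCases with
      | last => exact (h _ _ (by simpa using heq)).elim
      | cast i' =>
        obtain ⟨rfl, rfl⟩ := Prod.ext_iff.1 (φ.injective (by simpa using heq))
        rfl

@[simp]
lemma multiCopySnoc_apply {m : ℕ} (φ : Copy (A.multiCopy m) G) (ψ : Copy A G)
    (h : ∀ p a, φ p ≠ ψ a) (p : Fin (m + 1) × α) :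
    φ.multiCopySnoc ψ h p = Fin.lastCases (ψ p.2) (fun i => φ (i, p.2)) p.1 :=
  rfl

def ofPathFour {a b c d : γ} (hab : G.Adj a b) (hbc : G.Adj b c) (hcd : G.Adj c d)
    (hac : a ≠ c) (had : a ≠ d) (hbd : b ≠ d) : Copy (pathGraph 4) G where
  toHom.toFun := ![a, b, c, d]
  toHom.map_rel' := by
    intro i j hij
    rw [pathGraph_adj] at hij
    fin_cases i <;> fin_cases j <;> simp_all [hab.symm, hbc.symm, hcd.symm]
  injective' := by
    intro i j hij
    fin_cases i <;> fin_cases j <;>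
      simp_all [hab.ne, hbc.ne, hcd.ne, hab.ne', hbc.ne', hcd.ne', hac.symm, had.symm, hbd.symm]

lemma range_ofPathFour {a b c d : γ} (hab : G.Adj a b) (hbc : G.Adj b c) (hcd : G.Adj c d)
    (hac : a ≠ c) (had : a ≠ d) (hbd : b ≠ d) :
    Set.range (ofPathFour hab hbc hcd hac had hbd) = {a, b, c, d} := by
  change Set.range ![a, b, c, d] = _
  ext x
  simp [eq_comm, or_comm, or_left_comm]

end Copy

end SimpleGraph

section EdgeSets

variable {α : Type*} {G : SimpleGraph α} {A B C : Set α}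

lemma edgesInside_mono (h : A ⊆ B) : edgesInside G A ⊆ edgesInside G B :=
  fun _ ⟨he, hA⟩ => ⟨he, fun v hv => h (hA v hv)⟩

lemma edgesBetween_subset_edgesInside_union : edgesBetween G A B ⊆ edgesInside G (A ∪ B) := by
  rintro _ ⟨he, u, v, rfl, hu, hv⟩
  refine ⟨he, fun w hw => ?_⟩
  rcases Sym2.mem_iff.1 hw with rfl | rfl
  exacts [Or.inl hu, Or.inr hv]

lemma disjoint_edgesInside_edgesBetween (h : Disjoint A C) :
    Disjoint (edgesInside G C) (edgesBetween G A B) := by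
  rw [Set.disjoint_left]
  rintro _ ⟨-, hC⟩ ⟨-, u, v, rfl, hu, -⟩
  exact Set.disjoint_left.1 h hu (hC u (Sym2.mem_mk_left u v))

lemma ncard_le_mul_ncard_of_forall_exists_mem [Finite α] {S : Set (Sym2 α)} {d : ℕ}
    (hSW : S ⊆ edgesInside G B) (hS : ∀ e ∈ S, ∃ v ∈ A, v ∈ e ∧ (G.neighborSet v ∩ B).ncard ≤ d) :
    S.ncard ≤ d * A.ncard := by
  classical
  let A' := A.toFinite.toFinset.filter fun v => (G.neighborSet v ∩ B).ncard ≤ d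
  calc S.ncard ≤ (⋃ v ∈ A', (fun y => s(v, y)) '' (G.neighborSet v ∩ B)).ncard := by
        refine Set.ncard_le_ncard (fun e he => ?_) (Set.toFinite _)
        obtain ⟨v, hvA, hve, hvd⟩ := hS e he
        obtain ⟨y, rfl⟩ := Sym2.mem_iff_exists.1 hve
        obtain ⟨hadj, hB⟩ := hSW he
        simp only [Set.mem_iUnion]
        exact ⟨v, by simp [A', hvA, hvd], y, ⟨hadj, hB y (Sym2.mem_mk_right v y)⟩, rfl⟩
    _ ≤ ∑ v ∈ A', ((fun y => s(v, y)) '' (G.neighborSet v ∩ B)).ncard :=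
        Finset.set_ncard_biUnion_le _ _
    _ ≤ ∑ v ∈ A', d := Finset.sum_le_sum fun v hv =>
        (Set.ncard_image_le (Set.toFinite _)).trans (Finset.mem_filter.1 hv).2
    _ = d * A'.card := by rw [Finset.sum_const, smul_eq_mul, mul_comm]
    _ ≤ d * A.ncard := by
        gcongr
        rw [Set.ncard_eq_toFinset_card A]
        exact Finset.card_filter_le _ _

end EdgeSets

lemma hasRainbowCopy_of_isContained {n : ℕ} {c : Sym2 (Fin n) → ℕ} {V : Type*}
    {H : SimpleGraph V} {G : SimpleGraph (Fin n)} (hG : Set.InjOn c G.edgeSet) (hHG : H ⊑ G) :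
    HasRainbowCopy n c H := by
  obtain ⟨φ⟩ := hHG
  refine ⟨φ.toEmbedding, fun e he e' he' hc => ?_⟩
  exact Sym2.map.injective φ.injective
    (hG (φ.toHom.map_mem_edgeSet he) (φ.toHom.map_mem_edgeSet he') hc)

section NoFreeP4

variable {V : Type*} {G : SimpleGraph V} {m s : ℕ}

def p2Part (φ : Copy (kP4tP2 m s) G) (i : Fin s) : Set V :=
  Set.range fun j => φ (Sum.inr (i, j))

/-- A `P₄` of `G` is free for `φ` if it avoids the `P₄`-components of `φ` and all but at most
two of its `P₂`-components; together with `φ` it would then contain a copy of `kP₄ ∪ tP₂`. -/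
def NoFreeP4 (φ : Copy (kP4tP2 m s) G) : Prop :=
  ∀ (ψ : Copy (pathGraph 4) G) (I : Finset (Fin s)), I.card ≤ 2 →
    ¬ Set.range ψ ⊆ (Set.range φ)ᶜ ∪ ⋃ i ∈ I, p2Part φ i

theorem kP4tP2_isContained_of_copy {t : ℕ} (φ : Copy (kP4tP2 m s) G)
    (ψ : Copy (pathGraph 4) G) (g : Fin t ↪ Fin s)
    (hψ : ∀ a p, ψ a = φ p → ∃ i j, p = Sum.inr (i, j) ∧ i ∉ Set.range g) :
    kP4tP2 (m + 1) t ⊑ G := by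
  let φ₄ := φ.comp Copy.disjUnionInl
  let φ₂ := (φ.comp Copy.disjUnionInr).comp (Copy.multiCopyMap g)
  have h₄ : ∀ p a, φ₄ p ≠ ψ a := fun p a h => by
    obtain ⟨i, j, hp, -⟩ := hψ a _ h.symm
    exact Sum.inl_ne_inr hp
  refine ⟨Copy.sumElim (φ₄.multiCopySnoc ψ h₄) φ₂ ?_⟩
  rintro ⟨i, a⟩ ⟨i', j'⟩ h
  induction i using Fin.lastCases with
  | last =>
    simp only [Copy.multiCopySnoc_apply, Fin.lastCases_last] at h
    obtain ⟨i'', j'', hp, hg⟩ := hψ a (.inr (g i', j')) h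
    simp only [Sum.inr.injEq, Prod.mk.injEq] at hp
    exact hg ⟨i', hp.1⟩
  | cast i =>
    simp only [Copy.multiCopySnoc_apply, Fin.lastCases_castSucc] at h
    exact Sum.inl_ne_inr (φ.injective h)

lemma adj_rev_p2 (φ : Copy (kP4tP2 m s) G) (i : Fin s) (j : Fin 2) :
    G.Adj (φ (.inr (i, j.rev))) (φ (.inr (i, j))) :=
  φ.toHom.map_adj ⟨rfl, by fin_cases j <;> simp [pathGraph_adj]⟩

lemma ncard_p2Part (φ : Copy (kP4tP2 m s) G) (i : Fin s) : (p2Part φ i).ncard = 2 := by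
  rw [p2Part, Set.ncard_range_of_injective, Nat.card_eq_fintype_card, Fintype.card_fin]
  intro j j' h
  simpa using φ.injective h

variable {φ : Copy (kP4tP2 m s) G}

namespace NoFreeP4

lemma not_adj_of_adj_p2 (hφ : NoFreeP4 φ) {i : Fin s} {j : Fin 2} {v w : V}
    (hv : v ∉ Set.range φ) (hw : w ∉ Set.range φ) (huv : G.Adj (φ (.inr (i, j))) v) :
    ¬ G.Adj v w := by
  intro hvw
  refine hφ (Copy.ofPathFour (adj_rev_p2 φ i j) huv hvw (fun h => hv ⟨_, h⟩)
    (fun h => hw ⟨_, h⟩) (fun h => hw ⟨_, h⟩)) {i} (by simp) ?_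
  rw [Copy.range_ofPathFour]
  simp [Set.insert_subset_iff, p2Part, hv, hw]

lemma eq_of_adj_p2 (hφ : NoFreeP4 φ) {i₁ i₂ : Fin s} {j₁ j₂ : Fin 2} {v : V}
    (hv : v ∉ Set.range φ) (h₁ : G.Adj (φ (.inr (i₁, j₁))) v)
    (h₂ : G.Adj (φ (.inr (i₂, j₂))) v) : i₁ = i₂ := by
  by_contra hne
  have hφne : ∀ j j', φ (.inr (i₁, j)) ≠ φ (.inr (i₂, j')) := fun j j' h =>
    hne (Prod.ext_iff.1 (Sum.inr_injective (φ.injective h))).1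
  refine hφ (Copy.ofPathFour (adj_rev_p2 φ i₁ j₁) h₁ h₂.symm (fun h => hv ⟨_, h⟩)
    (hφne _ _) (hφne _ _)) {i₁, i₂} (Finset.card_le_two) ?_
  rw [Copy.range_ofPathFour]
  simp [Set.insert_subset_iff, p2Part, hv]

lemma false_of_path_compl (hφ : NoFreeP4 φ) {a b c d : V}
    (ha : a ∉ Set.range φ) (hb : b ∉ Set.range φ) (hc : c ∉ Set.range φ) (hd : d ∉ Set.range φ)
    (hab : G.Adj a b) (hbc : G.Adj b c) (hcd : G.Adj c d) (hac : a ≠ c) (had : a ≠ d)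
    (hbd : b ≠ d) : False :=
  hφ (Copy.ofPathFour hab hbc hcd hac had hbd) ∅ (by simp) <| by
    rw [Copy.range_ofPathFour]
    simp [Set.insert_subset_iff, ha, hb, hc, hd]

lemma ncard_neighborSet_le_two_of_adj_p2 (hφ : NoFreeP4 φ) {i : Fin s} {j : Fin 2} {v : V}
    (hv : v ∉ Set.range φ) (hu : G.Adj (φ (.inr (i, j))) v) :
    (G.neighborSet v ∩ ((Set.range φ)ᶜ ∪ Set.range fun p => φ (.inr p))).ncard ≤ 2 := by
  refine (Set.ncard_le_ncard ?_ (Set.finite_range _)).trans (ncard_p2Part φ i).le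
  rintro y ⟨hvy, hy | ⟨⟨i', j'⟩, rfl⟩⟩
  · exact (hφ.not_adj_of_adj_p2 hv hy hu hvy).elim
  · exact ⟨j', by rw [hφ.eq_of_adj_p2 hv hvy.symm hu]⟩

lemma neighborSet_inter_subset_compl (hφ : NoFreeP4 φ) {u w : V} (hu : u ∉ Set.range φ)
    (hw : w ∉ Set.range φ) (huw : G.Adj u w) :
    G.neighborSet u ∩ ((Set.range φ)ᶜ ∪ Set.range fun p => φ (.inr p)) ⊆ (Set.range φ)ᶜ := by
  rintro y ⟨huy, hy | ⟨p, rfl⟩⟩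
  · exact hy
  · exact (hφ.not_adj_of_adj_p2 hu hw huy.symm huw).elim

/-- An edge inside `V(G) ∖ V(φ)` whose ends both have three neighbours would be the middle edge of
a `P₄` there. -/
lemma ncard_neighborSet_le_two_of_adj_compl (hφ : NoFreeP4 φ) {u w : V}
    (hu : u ∉ Set.range φ) (hw : w ∉ Set.range φ) (huw : G.Adj u w) :
    (G.neighborSet u ∩ ((Set.range φ)ᶜ ∪ Set.range fun p => φ (.inr p))).ncard ≤ 2 ∨
      (G.neighborSet w ∩ ((Set.range φ)ᶜ ∪ Set.range fun p => φ (.inr p))).ncard ≤ 2 := by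
  by_contra! h
  obtain ⟨w₁, hw₁, hw₁w⟩ := Set.exists_ne_of_one_lt_ncard (one_lt_two.trans h.1) w
  obtain ⟨z, hz, hzuw₁⟩ := Set.exists_mem_notMem_of_ncard_lt_ncard
    ((Set.ncard_insert_le u {w₁}).trans_lt (by simpa using h.2))
  simp only [Set.mem_insert_iff, Set.mem_singleton_iff, not_or] at hzuw₁
  exact hφ.false_of_path_compl (hφ.neighborSet_inter_subset_compl hu hw huw hw₁) hu hw
    (hφ.neighborSet_inter_subset_compl hw hu huw.symm hz) hw₁.1.symm huw hz.1 hw₁w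
    (Ne.symm hzuw₁.2) (Ne.symm hzuw₁.1)

lemma exists_mem_ncard_neighborSet_le_two (hφ : NoFreeP4 φ) :
    ∀ e ∈ edgesInside G (Set.range φ)ᶜ ∪
        edgesBetween G (Set.range fun p => φ (.inr p)) (Set.range φ)ᶜ,
      ∃ v ∈ (Set.range φ)ᶜ, v ∈ e ∧
        (G.neighborSet v ∩ ((Set.range φ)ᶜ ∪ Set.range fun p => φ (.inr p))).ncard ≤ 2 := by
  rintro e (⟨he, hV⟩ | ⟨he, -, v, rfl, ⟨⟨i, j⟩, rfl⟩, hv⟩)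
  · induction e using Sym2.ind with
    | _ u w =>
      have hu := hV u (Sym2.mem_mk_left u w)
      have hw := hV w (Sym2.mem_mk_right u w)
      rcases hφ.ncard_neighborSet_le_two_of_adj_compl hu hw he with h | h
      exacts [⟨u, hu, Sym2.mem_mk_left u w, h⟩, ⟨w, hw, Sym2.mem_mk_right u w, h⟩]
  · exact ⟨v, hv, Sym2.mem_mk_right _ _, hφ.ncard_neighborSet_le_two_of_adj_p2 hv he⟩

end NoFreeP4

end NoFreeP4

theorem noFreeP4_of_not_hasRainbowCopy {n k t : ℕ} {c : Sym2 (Fin n) → ℕ}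
    {G : SimpleGraph (Fin n)} (hk : 1 ≤ k) (hno : ¬ HasRainbowCopy n c (kP4tP2 k t))
    (hG : Set.InjOn c G.edgeSet) (φ : Copy (kP4tP2 (k - 1) (t + 2)) G) : NoFreeP4 φ := by
  intro ψ I hI hψ
  obtain ⟨g⟩ : Nonempty (Fin t ↪ {i // i ∉ I}) :=
    Function.Embedding.nonempty_of_card_le <| by
      simp only [Fintype.card_fin, Fintype.card_subtype_compl, Fintype.card_coe]
      omega
  obtain ⟨m, rfl⟩ : ∃ m, k = m + 1 := ⟨k - 1, by omega⟩
  refine hno (hasRainbowCopy_of_isContained hG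
    (kP4tP2_isContained_of_copy φ ψ (g.trans (.subtype _)) ?_))
  intro a p hp
  rcases hψ ⟨a, rfl⟩ with hout | hin
  · exact (hout ⟨p, hp.symm⟩).elim
  · obtain ⟨i, hi, j, hj⟩ : ∃ i ∈ I, ∃ j, φ (Sum.inr (i, j)) = ψ a := by simpa [p2Part] using hin
    refine ⟨i, j, φ.injective (hp.symm.trans hj.symm), ?_⟩
    rintro ⟨b, rfl⟩
    exact (g b).2 hi

theorem stmt_14_general (k t n : ℕ) (hk : 2 ≤ k)
    (c : Sym2 (Fin n) → ℕ)
    (hno : ¬ HasRainbowCopy n c (kP4tP2 k t))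
    (f : ((Fin (k - 1) × Fin 4) ⊕ (Fin (t + 2) × Fin 2)) ↪ Fin n)
    (G : SimpleGraph (Fin n))
    (hG : Set.InjOn c G.edgeSet)
    (hHG : ∀ e ∈ (kP4tP2 (k - 1) (t + 2)).edgeSet, Sym2.map (⇑f) e ∈ G.edgeSet) :
    (edgesInside G (Set.range ⇑f)ᶜ).ncard +
      (edgesBetween G (Set.range fun p : Fin (t + 2) × Fin 2 => f (Sum.inr p))
        (Set.range ⇑f)ᶜ).ncard ≤ 2 * n - 4 * t - 8 * k := by
  let φ : Copy (kP4tP2 (k - 1) (t + 2)) G := ⟨⟨f, fun h => hHG s(_, _) h⟩, f.injective⟩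
  have hφ : NoFreeP4 φ := noFreeP4_of_not_hasRainbowCopy (by omega) hno hG φ
  have hcount : (edgesInside G (Set.range f)ᶜ ∪
      edgesBetween G (Set.range fun p => f (.inr p)) (Set.range f)ᶜ).ncard ≤
        2 * (Set.range f)ᶜ.ncard := by
    refine ncard_le_mul_ncard_of_forall_exists_mem (Set.union_subset (edgesInside_mono
      Set.subset_union_left) ?_) hφ.exists_mem_ncard_neighborSet_le_two
    exact edgesBetween_subset_edgesInside_union.trans (edgesInside_mono (Set.union_comm _ _).le)
  have hdisj : Disjoint (edgesInside G (Set.range f)ᶜ)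
      (edgesBetween G (Set.range fun p => f (.inr p)) (Set.range f)ᶜ) :=
    disjoint_edgesInside_edgesBetween (Set.disjoint_compl_right_iff_subset.2
      (Set.range_comp_subset_range _ _))
  have hcompl : (Set.range f)ᶜ.ncard = n - ((k - 1) * 4 + (t + 2) * 2) := by
    rw [Set.ncard_compl, Set.ncard_range_of_injective f.injective]
    simp [Nat.card_eq_fintype_card]
  rw [← Set.ncard_union_eq hdisj]
  omega

/-- Let `k ≥ 2`, `t ≥ k + 1`, `n ≥ 8k + 2t - 4`, let `c` be an
edge-coloring of `K_n` with no rainbow copy of `kP₄ ∪ tP₂`, let `f` be a rainbow copy of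
`(k - 1)P₄ ∪ (t + 2)P₂` in `K_n` (with `H₂` its `P₂`-part), let `G` be a rainbow spanning
subgraph of `K_n` containing the edges of that copy, and let `V'` be the complement of
the vertex set of the copy. Then `|E(G[V'])| + |[V(H₂), V']_G| ≤ 2n - 4t - 8k`. -/
theorem stmt_14 (k t n : ℕ) (hk : 2 ≤ k) (ht : k + 1 ≤ t) (hn : 8 * k + 2 * t - 4 ≤ n)
    (c : Sym2 (Fin n) → ℕ)
    (hno : ¬ HasRainbowCopy n c (kP4tP2 k t))
    (f : ((Fin (k - 1) × Fin 4) ⊕ (Fin (t + 2) × Fin 2)) ↪ Fin n)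
    (hH : Set.InjOn (fun e => c (Sym2.map (⇑f) e)) (kP4tP2 (k - 1) (t + 2)).edgeSet)
    (G : SimpleGraph (Fin n))
    (hG : Set.InjOn c G.edgeSet)
    (hHG : ∀ e ∈ (kP4tP2 (k - 1) (t + 2)).edgeSet, Sym2.map (⇑f) e ∈ G.edgeSet) :
    (edgesInside G (Set.range ⇑f)ᶜ).ncard +
      (edgesBetween G (Set.range fun p : Fin (t + 2) × Fin 2 => f (Sum.inr p))
        (Set.range ⇑f)ᶜ).ncard ≤ 2 * n - 4 * t - 8 * k :=
  stmt_14_general k t n hk c hno f G hG hHG
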